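/- Suppose {A₁, …, Aₙ} is a finite family of pairwise disjoint finite subsets of ℝ/ℤ that is pairwise unlinked (each Aᵢ lies in the closure of one connected component of the complement of each Aⱼ, j ≠ i). Then there exists an embedding into the closed unit disk of the abstract graph whose vertex set is {∞} ∪ {v_θ : θ ∈ ⋃Aᵢ}/∼ (where v_θ ∼ v_{θ'} iff θ, θ' lie in the same Aᵢ) with an edge from ∞ to each class for each θ, such that the edges emanate from the center in the cyclic order given by the arguments θ on the circle, and no two edges cross. Equivalently: the chord diagram in the unit disk obtained by joining, for each Aᵢ, all points e^{2πiθ}, θ ∈ Aᵢ, to a common interior point can be drawn with the convex hulls of distinct Aᵢ pairwise disjoint. -/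

import Mathlib

/-!
If `A i` is a single point, its image is an extreme point of the disk, so it lies in no
convex hull of other points of the circle. Otherwise the unlinking condition puts `A j` inside
an open arc `(α, β)` of the circle whose endpoints are consecutive points of `A i`, so that `A i`
lies on the complementary closed arc. The line through `e(α)` and `e(β)` then separates the two
images: for `z = e(t)` the signed distance to it is, up to a positive factor,
`sin (π (β - α)) sin (π (t - α)) sin (π (t - β))`, which is negative on `(α, β)` and nonnegative
on `[β, α + 1]`.
-/

abbrev Circle1 := AddCircle (1 : ℝ)

/-- The embedding θ ↦ e^{2πiθ} of ℝ/ℤ into ℂ. -/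
noncomputable def circleEmb (θ : Circle1) : ℂ := (AddCircle.toCircle θ : ℂ)

/-- `UnlinkedIn A B` : B lies in the closure of a single connected component of
the complement of A in ℝ/ℤ. -/
def UnlinkedIn (A B : Set Circle1) : Prop :=
  ∃ x ∈ Aᶜ, B ⊆ closure (connectedComponentIn Aᶜ x)

open Real Set ComplexConjugate

theorem disjoint_convexHull_of_le_of_lt {E : Type*} [AddCommGroup E] [Module ℝ E]
    {S T : Set E} (f : E →ₗ[ℝ] ℝ) (c : ℝ) (hS : ∀ z ∈ S, c ≤ f z) (hT : ∀ z ∈ T, f z < c) :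
    Disjoint (convexHull ℝ S) (convexHull ℝ T) := by
  have hS' := convexHull_min hS (convex_halfSpace_ge f.isLinear c)
  have hT' := convexHull_min hT (convex_halfSpace_lt f.isLinear c)
  exact Set.disjoint_left.mpr fun z hzS hzT => (show f z < c from hT' hzT).not_ge (hS' hzS)

theorem mem_of_mem_convexHull_of_subset_closedBall {E : Type*} [NormedAddCommGroup E]
    [NormedSpace ℝ E] [StrictConvexSpace ℝ E] {T : Set E} {c p : E} {r : ℝ} (hr : r ≠ 0)
    (hT : T ⊆ Metric.closedBall c r) (hp : p ∈ Metric.sphere c r) (hpT : p ∈ convexHull ℝ T) :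
    p ∈ T := by
  have hext := StrictConvexSpace.sphere_subset_extremePoints_closedBall c hr hp
  refine extremePoints_convexHull_subset
    (inter_extremePoints_subset_extremePoints_of_subset ?_ ⟨hpT, hext⟩)
  exact convexHull_min hT (convex_closedBall c r)

theorem four_mul_sin_sub_mul_sin_mul_sin (P Q : ℝ) :
    4 * sin (P - Q) * sin P * sin Q = sin (2 * Q) - sin (2 * P) + sin (2 * (P - Q)) := by
  rw [sin_two_mul, sin_two_mul, sin_two_mul, sin_sub, cos_sub]
  linear_combination (2 * sin Q * cos Q) * sin_sq_add_cos_sq P -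
    (2 * sin P * cos P) * sin_sq_add_cos_sq Q

theorem norm_circleEmb (θ : Circle1) : ‖circleEmb θ‖ = 1 :=
  Circle.norm_coe _

theorem circleEmb_injective : Function.Injective circleEmb :=
  Subtype.coe_injective.comp (AddCircle.injective_toCircle one_ne_zero)

theorem circleEmb_coe (t : ℝ) :
    circleEmb t = Complex.exp ((2 * π * t : ℝ) * Complex.I) := by
  rw [circleEmb, AddCircle.toCircle_apply_mk, Circle.coe_exp]
  push_cast
  ring_nf

theorem im_circleEmb_mul_conj (s t : ℝ) :
    (circleEmb s * conj (circleEmb t)).im = sin (2 * π * (s - t)) := by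
  simp only [circleEmb_coe, Complex.mul_im, Complex.conj_re, Complex.conj_im,
    Complex.exp_ofReal_mul_I_re, Complex.exp_ofReal_mul_I_im]
  rw [mul_sub, sin_sub]
  ring

/-- Its level line through `a` passes through `b`: this is the line carrying the chord `[a, b]`. -/
noncomputable def chordForm (a b : ℂ) : ℂ →ₗ[ℝ] ℝ :=
  Complex.imLm ∘ₗ LinearMap.mulRight ℝ (conj (b - a))

theorem chordForm_apply (a b z : ℂ) : chordForm a b z = (z * conj (b - a)).im := rfl

theorem chordForm_circleEmb_sub (α β t : ℝ) :
    chordForm (circleEmb α) (circleEmb β) (circleEmb t) -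
        chordForm (circleEmb α) (circleEmb β) (circleEmb α) =
      4 * sin (π * (β - α)) * sin (π * (t - α)) * sin (π * (t - β)) := by
  have key := four_mul_sin_sub_mul_sin_mul_sin (π * (t - α)) (π * (t - β))
  rw [show π * (t - α) - π * (t - β) = π * (β - α) by ring] at key
  rw [key]
  simp only [chordForm_apply, map_sub, mul_sub, Complex.sub_im, im_circleEmb_mul_conj,
    sub_self, mul_zero, sin_zero, show 2 * π * (α - β) = -(2 * π * (β - α)) by ring, sin_neg]
  ring_nf

theorem chordForm_circleEmb_lt {α β t : ℝ} (hβ : β < α + 1) (ht : t ∈ Ioo α β) :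
    chordForm (circleEmb α) (circleEmb β) (circleEmb t) <
      chordForm (circleEmb α) (circleEmb β) (circleEmb α) := by
  rw [← sub_neg, chordForm_circleEmb_sub]
  obtain ⟨htα, htβ⟩ := ht
  have h1 : 0 < sin (π * (β - α)) :=
    sin_pos_of_pos_of_lt_pi (by nlinarith [pi_pos]) (by nlinarith [pi_pos])
  have h2 : 0 < sin (π * (t - α)) :=
    sin_pos_of_pos_of_lt_pi (by nlinarith [pi_pos]) (by nlinarith [pi_pos])
  have h3 : sin (π * (t - β)) < 0 :=
    sin_neg_of_neg_of_neg_pi_lt (by nlinarith [pi_pos]) (by nlinarith [pi_pos])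
  exact mul_neg_of_pos_of_neg (by positivity) h3

theorem chordForm_le_circleEmb {α β t : ℝ} (hαβ : α ≤ β) (ht : t ∈ Icc β (α + 1)) :
    chordForm (circleEmb α) (circleEmb β) (circleEmb α) ≤
      chordForm (circleEmb α) (circleEmb β) (circleEmb t) := by
  rw [← sub_nonneg, chordForm_circleEmb_sub]
  obtain ⟨htβ, htα⟩ := ht
  have h1 : 0 ≤ sin (π * (β - α)) :=
    sin_nonneg_of_nonneg_of_le_pi (by nlinarith [pi_pos]) (by nlinarith [pi_pos])
  have h2 : 0 ≤ sin (π * (t - α)) :=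
    sin_nonneg_of_nonneg_of_le_pi (by nlinarith [pi_pos]) (by nlinarith [pi_pos])
  have h3 : 0 ≤ sin (π * (t - β)) :=
    sin_nonneg_of_nonneg_of_le_pi (by nlinarith [pi_pos]) (by nlinarith [pi_pos])
  positivity

theorem exists_gap_around {S : Finset Circle1} (hS : 2 ≤ S.card) {x : ℝ}
    (hx : (x : Circle1) ∉ S) :
    ∃ α β : ℝ, α < x ∧ x < β ∧ β < α + 1 ∧ (α : Circle1) ∈ S ∧ (β : Circle1) ∈ S ∧
      ∀ t ∈ Ioo α β, (t : Circle1) ∉ S := by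
  set ℓ : Circle1 → ℝ := fun s => AddCircle.equivIco 1 x s
  have hℓ : ∀ s, (ℓ s : Circle1) = s := fun _ => AddCircle.coe_equivIco
  have hℓS : ∀ s ∈ S, ℓ s ∈ Ioo x (x + 1) := fun s hs =>
    ⟨(AddCircle.equivIco 1 x s).2.1.lt_of_ne fun h => hx (h ▸ (hℓ s).symm ▸ hs),
      (AddCircle.equivIco 1 x s).2.2⟩
  set L := S.image ℓ
  have hL : L.Nonempty := (Finset.card_pos.mp (by omega)).image ℓ
  have hLcard : 1 < L.card := by
    rw [Finset.card_image_of_injective S fun a b h => by rw [← hℓ a, h, hℓ b]]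
    omega
  have hL_S : ∀ y ∈ L, (y : Circle1) ∈ S ∧ y ∈ Ioo x (x + 1) := by
    simp only [L, Finset.mem_image]
    rintro _ ⟨s, hs, rfl⟩
    exact ⟨(hℓ s).symm ▸ hs, hℓS s hs⟩
  obtain ⟨hβS, hxβ, -⟩ := hL_S _ (L.min'_mem hL)
  obtain ⟨hαS, -, hαx⟩ := hL_S _ (L.max'_mem hL)
  refine ⟨L.max' hL - 1, L.min' hL, by linarith, hxβ, by linarith [L.min'_lt_max'_of_card hLcard],
    by rwa [AddCircle.coe_sub, AddCircle.coe_period, sub_zero], hβS, ?_⟩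
  rintro t ⟨htα, htβ⟩ htS
  have hmin : L.min' hL ≤ ℓ t := L.min'_le _ (Finset.mem_image_of_mem ℓ htS)
  have hmax : ℓ t ≤ L.max' hL := L.le_max' _ (Finset.mem_image_of_mem ℓ htS)
  have : t = ℓ t := (AddCircle.coe_eq_coe_iff_of_mem_Ioc (a := L.max' hL - 1)
    ⟨htα, by linarith⟩ ⟨by linarith, by linarith⟩).mp (hℓ t).symm
  linarith

theorem exists_mem_Ioc_coe_eq (θ : Circle1) (a : ℝ) : ∃ t ∈ Ioc a (a + 1), (t : Circle1) = θ :=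
  ⟨_, (AddCircle.equivIoc 1 a θ).2, AddCircle.coe_equivIoc⟩

theorem connectedComponentIn_subset_arc {S : Set Circle1} {α β x : ℝ} (hβ : β ≤ α + 1)
    (hα : (α : Circle1) ∈ S) (hβS : (β : Circle1) ∈ S) (hx : x ∈ Ioo α β)
    (hxS : (x : Circle1) ∉ S) :
    connectedComponentIn Sᶜ (x : Circle1) ⊆ (↑) '' Ioo α β := by
  have hopen : ∀ a b : ℝ, IsOpen (((↑) : ℝ → Circle1) '' Ioo a b) := fun a b =>
    QuotientAddGroup.isOpenMap_coe _ isOpen_Ioo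
  have hdisj : Disjoint (((↑) : ℝ → Circle1) '' Ioo α β) ((↑) '' Ioo β (α + 1)) := by
    refine Set.disjoint_left.mpr ?_
    rintro _ ⟨t, ht, rfl⟩ ⟨u, hu, htu⟩
    have := (AddCircle.coe_eq_coe_iff_of_mem_Ioc (a := α) ⟨ht.1, by linarith [ht.2]⟩
      ⟨by linarith [hu.1, hx.1, hx.2], hu.2.le⟩).mp htu.symm
    linarith [ht.2, hu.1]
  have hcover : Sᶜ ⊆ ((↑) '' Ioo α β) ∪ ((↑) '' Ioo β (α + 1)) := by
    intro θ hθ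
    obtain ⟨t, ⟨htα, htα1⟩, rfl⟩ := exists_mem_Ioc_coe_eq θ α
    rcases lt_trichotomy t β with h | rfl | h
    · exact Or.inl ⟨t, ⟨htα, h⟩, rfl⟩
    · exact absurd hβS hθ
    · refine Or.inr ⟨t, ⟨h, htα1.lt_of_ne ?_⟩, rfl⟩
      rintro rfl
      exact hθ (by rwa [AddCircle.coe_add, AddCircle.coe_period, add_zero])
  exact isPreconnected_connectedComponentIn.subset_left_of_subset_union (hopen _ _) (hopen _ _)
    hdisj ((connectedComponentIn_subset _ _).trans hcover)
    ⟨_, mem_connectedComponentIn hxS, mem_image_of_mem _ hx⟩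

theorem closure_connectedComponentIn_subset_arc {S : Set Circle1} {α β x : ℝ} (hβ : β ≤ α + 1)
    (hα : (α : Circle1) ∈ S) (hβS : (β : Circle1) ∈ S) (hx : x ∈ Ioo α β)
    (hxS : (x : Circle1) ∉ S) :
    closure (connectedComponentIn Sᶜ (x : Circle1)) ⊆ (↑) '' Icc α β :=
  closure_minimal
    ((connectedComponentIn_subset_arc hβ hα hβS hx hxS).trans (image_mono Ioo_subset_Icc_self))
    (isCompact_Icc.image (AddCircle.continuous_mk' 1)).isClosed

theorem disjoint_convexHull_of_unlinkedIn {S T : Finset Circle1} (hST : Disjoint S T)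
    (hS : 2 ≤ S.card) (h : UnlinkedIn S T) :
    Disjoint (convexHull ℝ (circleEmb '' S)) (convexHull ℝ (circleEmb '' T)) := by
  obtain ⟨x, hx, hT⟩ := h
  obtain ⟨x, rfl⟩ := QuotientAddGroup.mk_surjective x
  obtain ⟨α, β, hαx, hxβ, hβα, hα, hβ, hgap⟩ := exists_gap_around hS hx
  have hTarc : ∀ θ ∈ T, ∃ t ∈ Ioo α β, (t : Circle1) = θ := by
    intro θ hθ
    obtain ⟨t, ⟨htα, htβ⟩, rfl⟩ :=
      closure_connectedComponentIn_subset_arc hβα.le hα hβ ⟨hαx, hxβ⟩ hx (hT hθ)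
    refine ⟨t, ⟨htα.lt_of_ne ?_, htβ.lt_of_ne ?_⟩, rfl⟩ <;> rintro rfl
    exacts [Finset.disjoint_left.mp hST hα hθ, Finset.disjoint_left.mp hST hβ hθ]
  refine disjoint_convexHull_of_le_of_lt (chordForm (circleEmb α) (circleEmb β))
    (chordForm (circleEmb α) (circleEmb β) (circleEmb α)) ?_ ?_
  · rintro _ ⟨θ, hθ, rfl⟩
    obtain ⟨t, ⟨htα, htα1⟩, rfl⟩ := exists_mem_Ioc_coe_eq θ α
    refine chordForm_le_circleEmb (hαx.trans hxβ).le ⟨not_lt.mp fun htβ => ?_, htα1⟩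
    exact hgap t ⟨htα, htβ⟩ hθ
  · rintro _ ⟨θ, hθ, rfl⟩
    obtain ⟨t, ht, rfl⟩ := hTarc θ hθ
    exact chordForm_circleEmb_lt hβα ht

theorem disjoint_convexHull_singleton_circleEmb {a : Circle1} {T : Set Circle1} (ha : a ∉ T) :
    Disjoint (convexHull ℝ (circleEmb '' {a})) (convexHull ℝ (circleEmb '' T)) := by
  rw [image_singleton, convexHull_singleton, disjoint_singleton_left]
  intro h
  have hT : circleEmb '' T ⊆ Metric.closedBall 0 1 := by
    rintro _ ⟨θ, -, rfl⟩
    simp [norm_circleEmb]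
  obtain ⟨b, hb, hba⟩ := mem_of_mem_convexHull_of_subset_closedBall one_ne_zero hT
    (by simp [norm_circleEmb]) h
  exact ha (circleEmb_injective hba ▸ hb)

/-- A pairwise disjoint, pairwise unlinked family of finite subsets of the circle
can be realized by a non-crossing chord diagram: the convex hulls (in the closed
unit disk) of the images e^{2πiθ} of the distinct sets are pairwise disjoint.
This is the planarity fact underlying the construction of embedded webs. -/
theorem unlinked_family_embeds (n : ℕ) (A : Fin n → Finset Circle1)
    (hdisj : Pairwise fun i j => Disjoint (A i) (A j))
    (hunl : Pairwise fun i j =>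
      UnlinkedIn ((A i : Set Circle1)) ((A j : Set Circle1))) :
    Pairwise fun i j =>
      Disjoint (convexHull ℝ (circleEmb '' (A i : Set Circle1)))
               (convexHull ℝ (circleEmb '' (A j : Set Circle1))) := by
  intro i j hij
  rcases le_or_gt (A i).card 1 with hle | hlt
  · rcases Nat.le_one_iff_eq_zero_or_eq_one.mp hle with h | h
    · simp [Finset.card_eq_zero.mp h]
    · obtain ⟨a, ha⟩ := Finset.card_eq_one.mp h
      rw [ha, Finset.coe_singleton]
      exact disjoint_convexHull_singleton_circleEmb
        (Finset.disjoint_left.mp (hdisj hij) (ha ▸ Finset.mem_singleton_self a))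
  · exact disjoint_convexHull_of_unlinkedIn (hdisj hij) hlt (hunl hij)
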